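/- Let C be an n×n matrix with all entries in {0,1}, with row-sums r_1 ≥ r_2 ≥ ... ≥ r_n > 0, and let t satisfy n − r_n + 1 ≤ t ≤ n. Then ρ(C) ≥ (r_t + sqrt(r_t^2 − 4(r_n − 1)(r_t − r_n)))/2. In particular, this lower bound is at least r_n, with equality in the bound's comparison to r_n iff r_t = r_n. -/

import Mathlib

/-!
Put `a = r_t`, `m = r_n` and let `B` be the larger root of `λ² - aλ + (m - 1)(a - m)`, so
`B ≥ m`. Weight the first `t` coordinates by `v = B - m + 1 ≥ 1` and the others by `1`. A row
with `r` ones puts at most `n - t ≤ m - 1` of them on the light coordinates, so the weighted row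
sum is at least `v r - (v - 1)(m - 1)`; this is `≥ B` for every row and `≥ B v` for the first `t`
rows, since `B` solves the quadratic. Hence `C x ≥ B x` for a positive vector `x`, and iterating
gives `‖C^k‖ ≥ c B^k`, so `ρ(C) ≥ B` by Gelfand's formula.
-/

/-- Spectral radius of a real square matrix: maximum modulus of its complex eigenvalues. -/
noncomputable def specRad {n : ℕ} (A : Matrix (Fin n) (Fin n) ℝ) : ℝ :=
  ((A.map (fun x => (x : ℂ))).charpoly.roots.map (fun z => ‖z‖)).foldr max 0

open Matrix Filter Topology

attribute [local instance] Matrix.linftyOpNormedRing Matrix.linftyOpNormedAlgebra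

namespace Multiset

variable {α : Type*} [LinearOrder α]

theorem le_foldr_max (b : α) (s : Multiset α) : b ≤ s.foldr max b := by
  induction s using Multiset.induction_on with
  | empty => simp
  | cons a s ih => exact ih.trans (by simp)

theorem le_foldr_max_of_mem {b x : α} {s : Multiset α} (hx : x ∈ s) : x ≤ s.foldr max b := by
  induction s using Multiset.induction_on with
  | empty => simp at hx
  | cons a s ih =>
    rcases mem_cons.1 hx with rfl | hx
    · simp
    · exact (ih hx).trans (by simp)

end Multiset

theorem specRad_nonneg {n : ℕ} (A : Matrix (Fin n) (Fin n) ℝ) : 0 ≤ specRad A :=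
  Multiset.le_foldr_max _ _

theorem norm_le_specRad_of_mem_spectrum {n : ℕ} {A : Matrix (Fin n) (Fin n) ℝ} {μ : ℂ}
    (hμ : μ ∈ spectrum ℂ (A.map (fun x => (x : ℂ)))) : ‖μ‖ ≤ specRad A :=
  Multiset.le_foldr_max_of_mem <| Multiset.mem_map_of_mem _ <|
    (Polynomial.mem_roots (charpoly_monic _).ne_zero).2 (mem_spectrum_iff_isRoot_charpoly.1 hμ)

theorem spectralRadius_le_specRad {n : ℕ} (A : Matrix (Fin n) (Fin n) ℝ) :
    spectralRadius ℂ (A.map (fun x => (x : ℂ))) ≤ ENNReal.ofReal (specRad A) :=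
  iSup₂_le fun μ hμ => by
    rw [← enorm_eq_nnnorm, ← ofReal_norm]
    exact ENNReal.ofReal_le_ofReal (norm_le_specRad_of_mem_spectrum hμ)

theorem ofReal_le_spectralRadius_of_mul_pow_le_norm {A : Type*} [NormedRing A]
    [NormedAlgebra ℂ A] [CompleteSpace A] (a : A) {c B : ℝ} (hc : 0 < c)
    (h : ∀ k : ℕ, c * B ^ k ≤ ‖a ^ k‖) : ENNReal.ofReal B ≤ spectralRadius ℂ a := by
  rcases le_or_gt B 0 with hB | hB
  · simp [ENNReal.ofReal_of_nonpos hB]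
  have hc_root : Tendsto (fun k : ℕ => c ^ (1 / k : ℝ)) atTop (𝓝 1) := by
    simpa [Function.comp_def] using (Real.continuousAt_const_rpow hc.ne').tendsto.comp
      tendsto_one_div_atTop_nhds_zero_nat
  have hroot : Tendsto (fun k : ℕ => (c * B ^ k) ^ (1 / k : ℝ)) atTop (𝓝 B) := by
    refine (one_mul B ▸ hc_root.mul_const B).congr' ?_
    filter_upwards [eventually_ne_atTop 0] with k hk
    rw [Real.mul_rpow hc.le (by positivity), one_div, Real.pow_rpow_inv_natCast hB.le hk]
  refine le_of_tendsto_of_tendsto' (ENNReal.tendsto_ofReal hroot)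
    (spectrum.pow_norm_pow_one_div_tendsto_nhds_spectralRadius a) fun k => ?_
  exact ENNReal.ofReal_le_ofReal (Real.rpow_le_rpow (by positivity) (h k) (by positivity))

theorem Matrix.linfty_opNorm_map_ofReal_pow {n : Type*} [Fintype n] [DecidableEq n]
    (M : Matrix n n ℝ) (k : ℕ) : ‖M.map ((↑) : ℝ → ℂ) ^ k‖ = ‖M ^ k‖ := by
  erw [← M.map_pow Complex.ofRealHom k]
  simp [linfty_opNorm_def]

theorem Matrix.pow_smul_le_pow_mulVec {ι : Type*} [Fintype ι] [DecidableEq ι]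
    {C : Matrix ι ι ℝ} (hC : ∀ i j, 0 ≤ C i j) {x : ι → ℝ} {B : ℝ} (hB : 0 ≤ B)
    (h : B • x ≤ C *ᵥ x) (k : ℕ) : B ^ k • x ≤ C ^ k *ᵥ x := by
  have mono : ∀ {y z : ι → ℝ}, y ≤ z → C *ᵥ y ≤ C *ᵥ z := fun hyz i =>
    Finset.sum_le_sum fun j _ => mul_le_mul_of_nonneg_left (hyz j) (hC i j)
  induction k with
  | zero => simp
  | succ k ih =>
    calc B ^ (k + 1) • x = B ^ k • (B • x) := by rw [pow_succ, mul_smul]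
      _ ≤ B ^ k • (C *ᵥ x) := smul_le_smul_of_nonneg_left h (pow_nonneg hB k)
      _ = C *ᵥ (B ^ k • x) := (mulVec_smul C (B ^ k) x).symm
      _ ≤ C *ᵥ (C ^ k *ᵥ x) := mono ih
      _ = C ^ (k + 1) *ᵥ x := by rw [mulVec_mulVec, pow_succ']

theorem le_specRad_of_smul_le_mulVec {n : ℕ} {C : Matrix (Fin n) (Fin n) ℝ}
    (hC : ∀ i j, 0 ≤ C i j) {x : Fin n → ℝ} (hx : 0 ≤ x) (hx0 : x ≠ 0) {B : ℝ}
    (h : B • x ≤ C *ᵥ x) : B ≤ specRad C := by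
  rcases le_or_gt B 0 with hB | hB
  · exact hB.trans (specRad_nonneg C)
  obtain ⟨i, hi⟩ : ∃ i, 0 < x i := by
    by_contra! hle
    exact hx0 (le_antisymm hle hx)
  have hx_norm : 0 < ‖x‖ := norm_pos_iff.2 hx0
  have hpow : ∀ k : ℕ, x i / ‖x‖ * B ^ k ≤ ‖C.map ((↑) : ℝ → ℂ) ^ k‖ := fun k => by
    rw [linfty_opNorm_map_ofReal_pow, div_mul_eq_mul_div, div_le_iff₀ hx_norm]
    calc x i * B ^ k = (B ^ k • x) i := mul_comm _ _
      _ ≤ (C ^ k *ᵥ x) i := C.pow_smul_le_pow_mulVec hC hB.le h k i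
      _ ≤ ‖C ^ k *ᵥ x‖ := (Real.le_norm_self _).trans (norm_le_pi_norm _ i)
      _ ≤ ‖C ^ k‖ * ‖x‖ := linfty_opNorm_mulVec _ _
  have := ofReal_le_spectralRadius_of_mul_pow_le_norm _ (div_pos hi hx_norm) hpow
  exact (ENNReal.ofReal_le_ofReal_iff (specRad_nonneg C)).1
    (this.trans (spectralRadius_le_specRad C))

theorem sum_sub_ite_lt {n t : ℕ} (ht : t ≤ n) (v : ℝ) :
    ∑ j : Fin n, (v - if (j : ℕ) < t then v else 1) = (v - 1) * (n - t) := by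
  have hcard : (Finset.univ.filter fun j : Fin n => ¬ (j : ℕ) < t).card = n - t := by
    rw [Finset.filter_not, Finset.card_sdiff_of_subset (Finset.filter_subset _ _),
      Fin.card_filter_val_lt, Finset.card_univ, Fintype.card_fin]
    omega
  simp only [apply_ite (v - ·), sub_self, Finset.sum_ite, Finset.sum_const_zero, zero_add,
    Finset.sum_const, hcard, nsmul_eq_mul]
  push_cast [ht]
  ring

theorem le_mulVec_ite_lt {n t : ℕ} (ht : t ≤ n) {C : Matrix (Fin n) (Fin n) ℝ}
    (hC : ∀ i j, C i j ≤ 1) {v : ℝ} (hv : 1 ≤ v) (i : Fin n) :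
    v * ∑ j, C i j - (v - 1) * (n - t) ≤ (C *ᵥ fun j => if (j : ℕ) < t then v else 1) i := by
  set x : Fin n → ℝ := fun j => if (j : ℕ) < t then v else 1
  have hx : ∀ j, 0 ≤ v - x j := fun j => by by_cases h : (j : ℕ) < t <;> simp [x, h, hv]
  have hdefect : ∑ j, C i j * (v - x j) ≤ ∑ j, (v - x j) :=
    Finset.sum_le_sum fun j _ => mul_le_of_le_one_left (hx j) (hC i j)
  have hsplit : (C *ᵥ x) i = v * ∑ j, C i j - ∑ j, C i j * (v - x j) := by
    simp only [mulVec, dotProduct, Finset.mul_sum, ← Finset.sum_sub_distrib]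
    exact Finset.sum_congr rfl fun j _ => by ring
  rw [hsplit, ← sum_sub_ite_lt ht v]
  linarith

/-- The larger root of `λ² - aλ + (m - 1)(a - m)`. -/
noncomputable def largerRoot (a m : ℝ) : ℝ := (a + √(a ^ 2 - 4 * (m - 1) * (a - m))) / 2

section largerRoot

variable {a m : ℝ}

theorem largerRoot_discrim_nonneg (h : m ≤ a) : 0 ≤ a ^ 2 - 4 * (m - 1) * (a - m) := by
  nlinarith [sq_nonneg (a - 2 * m)]

theorem largerRoot_quadratic_eq_zero (h : m ≤ a) :
    largerRoot a m ^ 2 - a * largerRoot a m + (m - 1) * (a - m) = 0 := by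
  unfold largerRoot
  linear_combination Real.sq_sqrt (largerRoot_discrim_nonneg h) / 4

theorem le_largerRoot (h : m ≤ a) : m ≤ largerRoot a m := by
  have : |a - 2 * m| ≤ √(a ^ 2 - 4 * (m - 1) * (a - m)) := Real.abs_le_sqrt (by nlinarith)
  unfold largerRoot
  linarith [neg_abs_le (a - 2 * m)]

theorem largerRoot_eq_iff (hm : 0 ≤ m) (h : m ≤ a) : largerRoot a m = m ↔ a = m := by
  unfold largerRoot
  constructor
  · intro hroot
    have hs : √(a ^ 2 - 4 * (m - 1) * (a - m)) = 2 * m - a := by linarith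
    have := Real.sq_sqrt (largerRoot_discrim_nonneg h)
    rw [hs] at this
    nlinarith
  · rintro rfl
    rw [show a ^ 2 - 4 * (a - 1) * (a - a) = a ^ 2 by ring, Real.sqrt_sq hm]
    ring

end largerRoot

theorem largerRoot_le_specRad {n t : ℕ} (hn : 0 < n) (ht : t ≤ n)
    {C : Matrix (Fin n) (Fin n) ℝ} (hC0 : ∀ i j, 0 ≤ C i j) (hC1 : ∀ i j, C i j ≤ 1)
    {a m : ℝ} (ham : m ≤ a) (hm : ∀ i, m ≤ ∑ j, C i j)
    (ha : ∀ i : Fin n, (i : ℕ) < t → a ≤ ∑ j, C i j) (htm : (n : ℝ) - t ≤ m - 1) :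
    largerRoot a m ≤ specRad C := by
  set B := largerRoot a m
  set v := B - m + 1
  have hv : 1 ≤ v := by linarith [le_largerRoot ham]
  have hB := largerRoot_quadratic_eq_zero ham
  set x : Fin n → ℝ := fun j => if (j : ℕ) < t then v else 1
  have hx : ∀ j, 1 ≤ x j := fun j => by by_cases h : (j : ℕ) < t <;> simp [x, h, hv]
  refine le_specRad_of_smul_le_mulVec hC0 (fun j => zero_le_one.trans (hx j))
    (fun h0 => absurd (hx ⟨0, hn⟩) (by simp [h0])) fun i => ?_
  have hrow := le_mulVec_ite_lt ht hC1 hv i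
  have hlight := mul_le_mul_of_nonneg_left htm (by linarith : (0 : ℝ) ≤ v - 1)
  by_cases hi : (i : ℕ) < t
  · have := mul_le_mul_of_nonneg_left (ha i hi) (by linarith : (0 : ℝ) ≤ v)
    simp only [Pi.smul_apply, smul_eq_mul, x, hi, if_true] at hrow ⊢
    nlinarith
  · have := mul_le_mul_of_nonneg_left (hm i) (by linarith : (0 : ℝ) ≤ v)
    simp only [Pi.smul_apply, smul_eq_mul, x, hi, if_false] at hrow ⊢
    nlinarith

theorem stmt_19 {n : ℕ} (hn : 0 < n) (C : Matrix (Fin n) (Fin n) ℝ)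
    (h01 : ∀ i j, C i j = 0 ∨ C i j = 1)
    (r : Fin n → ℝ) (hrdef : ∀ i, r i = ∑ j, C i j)
    (hsorted : ∀ i j : Fin n, i ≤ j → r j ≤ r i)
    (hrn : 0 < r ⟨n - 1, by omega⟩)
    (t : ℕ) (ht2 : t ≤ n)
    (hta : (n : ℝ) - r ⟨n - 1, by omega⟩ + 1 ≤ (t : ℝ)) :
    (r ⟨t - 1, by omega⟩ +
      Real.sqrt ((r ⟨t - 1, by omega⟩) ^ 2 -
        4 * (r ⟨n - 1, by omega⟩ - 1) * (r ⟨t - 1, by omega⟩ - r ⟨n - 1, by omega⟩))) / 2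
      ≤ specRad C ∧
    r ⟨n - 1, by omega⟩ ≤
      (r ⟨t - 1, by omega⟩ +
        Real.sqrt ((r ⟨t - 1, by omega⟩) ^ 2 -
          4 * (r ⟨n - 1, by omega⟩ - 1) * (r ⟨t - 1, by omega⟩ - r ⟨n - 1, by omega⟩))) / 2 ∧
    ((r ⟨t - 1, by omega⟩ +
        Real.sqrt ((r ⟨t - 1, by omega⟩) ^ 2 -
          4 * (r ⟨n - 1, by omega⟩ - 1) * (r ⟨t - 1, by omega⟩ - r ⟨n - 1, by omega⟩))) / 2
        = r ⟨n - 1, by omega⟩ ↔ r ⟨t - 1, by omega⟩ = r ⟨n - 1, by omega⟩) := by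
  have hC0 : ∀ i j, 0 ≤ C i j := fun i j => by rcases h01 i j with h | h <;> simp [h]
  have hC1 : ∀ i j, C i j ≤ 1 := fun i j => by rcases h01 i j with h | h <;> simp [h]
  have hlast : ∀ i : Fin n, r ⟨n - 1, by omega⟩ ≤ r i := fun i =>
    hsorted i _ (Fin.le_def.2 (by simp only; omega))
  have hfirst : ∀ i : Fin n, (i : ℕ) < t → r ⟨t - 1, by omega⟩ ≤ r i := fun i hi =>
    hsorted i _ (Fin.le_def.2 (by simp only; omega))
  have ham := hlast ⟨t - 1, by omega⟩
  refine ⟨?_, le_largerRoot ham, largerRoot_eq_iff hrn.le ham⟩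
  exact largerRoot_le_specRad hn ht2 hC0 hC1 ham (fun i => hrdef i ▸ hlast i)
    (fun i hi => hrdef i ▸ hfirst i hi) (by linarith)
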